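/- arXiv:2106.07582 — 2 statements merged into one kernel-verified Lean document; each statement's English description precedes it below -/
import Mathlib

section
/- Let θ₀ > 0, let t be a positive integer, and let β₁, …, β_{t+1} ∈ (0,1). Define α_i = 1 − β_i, ᾱ_i = ∏_{j=1}^i α_j, k_i = β_i/(α_i·θ₀²), θ_i = sqrt(ᾱ_i)·θ₀, and k̄_i = ∑_{j=1}^i k_j. Let ḡ_t ~ Γ(k̄_t, θ_t) and g_{t+1} ~ Γ(k_{t+1}, θ_{t+1}) be independent real random variables. Then sqrt(1 − β_{t+1})·ḡ_t + g_{t+1} has distribution Γ(k̄_{t+1}, θ_{t+1}). -/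
/-!
Mathlib's `gammaMeasure a r` is parametrised by the rate `r = 1/θ`. Multiplying a
`Γ(a, rate r)` variable by `c > 0` gives `Γ(a, rate r/c)`, and
`Γ(a, r) ∗ Γ(b, r) = Γ(a + b, r)` because the convolution of the densities is a beta integral.
Since `θ_{t+1} = sqrt(1 - β_{t+1}) · θ_t`, the law of `sqrt(1 - β_{t+1}) · ḡ_t` is
`Γ(k̄_t, 1/θ_{t+1})`; by independence the law of the sum is its convolution with
`Γ(k_{t+1}, 1/θ_{t+1})`, which is `Γ(k̄_t + k_{t+1}, 1/θ_{t+1})`.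
-/

open MeasureTheory ProbabilityTheory Set
open scoped ENNReal

lemma integral_rpow_mul_sub_rpow_eq_mul_beta {a b z : ℝ} (ha : 0 < a) (hb : 0 < b) (hz : 0 < z) :
    ∫ u in 0..z, u ^ (a - 1) * (z - u) ^ (b - 1) = z ^ (a + b - 1) * beta a b := by
  apply Complex.ofReal_injective
  have hcast : ∀ u ∈ uIcc 0 z, ((u ^ (a - 1) * (z - u) ^ (b - 1) : ℝ) : ℂ) =
      (u : ℂ) ^ ((a : ℂ) - 1) * ((z : ℂ) - u) ^ ((b : ℂ) - 1) := by
    intro u hu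
    rw [uIcc_of_le hz.le] at hu
    push_cast [Complex.ofReal_cpow hu.1, Complex.ofReal_cpow (sub_nonneg.mpr hu.2)]
    rfl
  rw [← intervalIntegral.integral_ofReal, intervalIntegral.integral_congr hcast,
    Complex.betaIntegral_scaled _ _ hz, Complex.betaIntegral_eq_Gamma_mul_div _ _ (by simpa)
      (by simpa), beta]
  push_cast [Complex.ofReal_cpow hz.le, ← Complex.Gamma_ofReal]
  rfl

lemma gammaPDFReal_mul_gammaPDFReal_sub (a b r z u : ℝ) :
    gammaPDFReal a r u * gammaPDFReal b r (z - u) =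
      (Icc 0 z).indicator (fun u ↦ r ^ a * r ^ b / (Real.Gamma a * Real.Gamma b) *
        Real.exp (-(r * z)) * (u ^ (a - 1) * (z - u) ^ (b - 1))) u := by
  by_cases hu : u ∈ Icc 0 z
  · rw [indicator_of_mem hu, gammaPDFReal, if_pos hu.1, gammaPDFReal,
      if_pos (sub_nonneg.mpr hu.2)]
    have hexp : Real.exp (-(r * z)) = Real.exp (-(r * u)) * Real.exp (-(r * (z - u))) := by
      rw [← Real.exp_add]; ring_nf
    rw [hexp]
    ring
  · rw [indicator_of_notMem hu]
    rcases not_and_or.mp hu with hu | hu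
    · rw [gammaPDFReal, if_neg hu, zero_mul]
    · rw [gammaPDFReal, gammaPDFReal, if_neg (show ¬ 0 ≤ z - u by linarith [not_le.mp hu]),
        mul_zero]

lemma gammaPDF_lconvolution_gammaPDF {a b r z : ℝ} (ha : 0 < a) (hb : 0 < b) (hr : 0 < r)
    (hz : z ≠ 0) : (gammaPDF a r ⋆ₗ gammaPDF b r) z = gammaPDF (a + b) r z := by
  simp only [lconvolution_def, neg_add_eq_sub]
  rcases hz.lt_or_gt with hz | hz
  · rw [gammaPDF_of_neg hz]
    refine (lintegral_congr fun u ↦ ?_).trans lintegral_zero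
    rcases lt_or_ge u 0 with hu | hu
    · rw [gammaPDF_of_neg hu, zero_mul]
    · rw [gammaPDF_of_neg (by linarith : z - u < 0), mul_zero]
  · set C := r ^ a * r ^ b / (Real.Gamma a * Real.Gamma b) * Real.exp (-(r * z)) with hC
    have hbeta := integral_rpow_mul_sub_rpow_eq_mul_beta ha hb hz
    have hint : IntegrableOn (fun u ↦ u ^ (a - 1) * (z - u) ^ (b - 1)) (Icc 0 z) := by
      rw [integrableOn_Icc_iff_integrableOn_Ioc,
        ← intervalIntegrable_iff_integrableOn_Ioc_of_le hz.le]
      -- a non-integrable function would have interval integral `0`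
      exact intervalIntegral.intervalIntegrable_of_integral_ne_zero
        (by rw [hbeta]; exact (mul_pos (by positivity) (beta_pos ha hb)).ne')
    calc ∫⁻ u, gammaPDF a r u * gammaPDF b r (z - u)
        = ∫⁻ u, ENNReal.ofReal (gammaPDFReal a r u * gammaPDFReal b r (z - u)) := by
          simp_rw [gammaPDF, ENNReal.ofReal_mul (gammaPDFReal_nonneg ha hr _)]
      _ = ENNReal.ofReal (∫ u, gammaPDFReal a r u * gammaPDFReal b r (z - u)) := by
          refine (ofReal_integral_eq_lintegral_ofReal ?_ ?_).symm
          · simp_rw [gammaPDFReal_mul_gammaPDFReal_sub]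
            exact (integrable_indicator_iff measurableSet_Icc).mpr (hint.const_mul C)
          · exact .of_forall fun u ↦
              mul_nonneg (gammaPDFReal_nonneg ha hr u) (gammaPDFReal_nonneg hb hr (z - u))
      _ = ENNReal.ofReal (C * (z ^ (a + b - 1) * beta a b)) := by
          simp_rw [gammaPDFReal_mul_gammaPDFReal_sub]
          rw [integral_indicator measurableSet_Icc, integral_Icc_eq_integral_Ioc,
            ← intervalIntegral.integral_of_le hz.le, intervalIntegral.integral_const_mul, hbeta]
      _ = gammaPDF (a + b) r z := by
          rw [gammaPDF_of_nonneg hz.le, beta, Real.rpow_add hr]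
          have := Real.Gamma_pos_of_pos ha
          have := Real.Gamma_pos_of_pos hb
          have := Real.Gamma_pos_of_pos (add_pos ha hb)
          congr 1
          rw [hC]
          field_simp

lemma measurable_gammaPDF (a r : ℝ) : Measurable (gammaPDF a r) :=
  (measurable_gammaPDFReal a r).ennreal_ofReal

lemma gammaMeasure_conv_gammaMeasure {a b r : ℝ} (ha : 0 < a) (hb : 0 < b) (hr : 0 < r) :
    gammaMeasure a r ∗ gammaMeasure b r = gammaMeasure (a + b) r := by
  rw [gammaMeasure, gammaMeasure, conv_withDensity_eq_lconvolution (measurable_gammaPDF a r)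
    (measurable_gammaPDF b r)]
  refine withDensity_congr_ae ?_
  filter_upwards [Measure.ae_ne volume 0] with z hz
  exact gammaPDF_lconvolution_gammaPDF ha hb hr hz

lemma MeasurableEquiv.map_withDensity {α β : Type*} [MeasurableSpace α] [MeasurableSpace β]
    (e : α ≃ᵐ β) (μ : Measure α) (f : α → ℝ≥0∞) :
    (μ.withDensity f).map e = (μ.map e).withDensity (f ∘ e.symm) := by
  ext s hs
  rw [e.map_apply, withDensity_apply _ (e.measurable hs), withDensity_apply _ hs,
    e.restrict_map, lintegral_map_equiv]
  simp

lemma gammaPDF_const_mul_inv {a r c : ℝ} (hr : 0 ≤ r) (hc : 0 < c) (y : ℝ) :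
    ENNReal.ofReal c⁻¹ * gammaPDF a r (c⁻¹ * y) = gammaPDF a (r / c) y := by
  rcases lt_or_ge y 0 with hy | hy
  · rw [gammaPDF_of_neg hy, gammaPDF_of_neg (mul_neg_of_pos_of_neg (inv_pos.mpr hc) hy),
      mul_zero]
  rw [gammaPDF_of_nonneg hy, gammaPDF_of_nonneg (by positivity),
    ← ENNReal.ofReal_mul (by positivity)]
  congr 1
  rw [Real.mul_rpow (by positivity) hy, Real.rpow_sub_one (by positivity), div_eq_mul_inv r,
    Real.mul_rpow hr (by positivity)]
  field_simp

lemma gammaMeasure_map_const_mul {a r c : ℝ} (hr : 0 ≤ r) (hc : 0 < c) :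
    (gammaMeasure a r).map (c * ·) = gammaMeasure a (r / c) := by
  change (gammaMeasure a r).map (MeasurableEquiv.mulLeft₀ c hc.ne') = _
  rw [gammaMeasure, MeasurableEquiv.map_withDensity, MeasurableEquiv.coe_mulLeft₀,
    Real.map_volume_mul_left hc.ne', withDensity_smul_measure, ← withDensity_smul' _ _ (by simp),
    abs_of_pos (inv_pos.mpr hc), gammaMeasure]
  congr 1
  funext y
  exact gammaPDF_const_mul_inv hr hc y

lemma ProbabilityTheory.IndepFun.map_const_mul_add {Ω : Type*} [MeasurableSpace Ω]
    {μ : Measure Ω} [IsFiniteMeasure μ] {X Y : Ω → ℝ} (hXY : IndepFun X Y μ)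
    (hX : Measurable X) (hY : Measurable Y) (c : ℝ) :
    μ.map (fun ω ↦ c * X ω + Y ω) = (μ.map X).map (c * ·) ∗ μ.map Y := by
  rw [Measure.map_map (measurable_const_mul c) hX]
  exact (hXY.comp (measurable_const_mul c) measurable_id).map_add_eq_map_conv_map
    (hX.const_mul c) hY

/-- Let `θ₀ > 0`, `t ≥ 1`, `β₁, …, β_{t+1} ∈ (0,1)`, `α_i = 1 − β_i`, `ᾱ_i = ∏_{j=1}^i α_j`,
`k_i = β_i/(α_i·θ₀²)`, `θ_i = sqrt(ᾱ_i)·θ₀` and `k̄_i = ∑_{j=1}^i k_j`.  If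
`ḡ ~ Γ(k̄_t, θ_t)` and `g ~ Γ(k_{t+1}, θ_{t+1})` are independent (Gamma with shape and
scale parameters, i.e. rate the inverse of the scale), then
`sqrt(1 − β_{t+1})·ḡ + g ~ Γ(k̄_{t+1}, θ_{t+1})`. -/
theorem gamma_diffusion_step {Ω : Type*} [MeasureSpace Ω]
    [IsProbabilityMeasure (ℙ : Measure Ω)]
    (θ₀ : ℝ) (hθ₀ : 0 < θ₀) (t : ℕ) (ht : 0 < t)
    (β : ℕ → ℝ) (hβ : ∀ i, 1 ≤ i → i ≤ t + 1 → β i ∈ Set.Ioo (0 : ℝ) 1)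
    (α : ℕ → ℝ) (hα : ∀ i, α i = 1 - β i)
    (αbar : ℕ → ℝ) (hαbar : ∀ i, αbar i = ∏ j ∈ Finset.Icc 1 i, α j)
    (k : ℕ → ℝ) (hk : ∀ i, k i = β i / (α i * θ₀ ^ 2))
    (θ : ℕ → ℝ) (hθ : ∀ i, θ i = Real.sqrt (αbar i) * θ₀)
    (kbar : ℕ → ℝ) (hkbar : ∀ i, kbar i = ∑ j ∈ Finset.Icc 1 i, k j)
    (gbar g : Ω → ℝ) (hgbarm : Measurable gbar) (hgm : Measurable g)
    (hgbar : Measure.map gbar ℙ = gammaMeasure (kbar t) (θ t)⁻¹)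
    (hg : Measure.map g ℙ = gammaMeasure (k (t + 1)) (θ (t + 1))⁻¹)
    (hindep : IndepFun gbar g ℙ) :
    Measure.map (fun ω => Real.sqrt (1 - β (t + 1)) * gbar ω + g ω) ℙ =
      gammaMeasure (kbar (t + 1)) (θ (t + 1))⁻¹ := by
  set c := Real.sqrt (1 - β (t + 1))
  have hβ' : ∀ j ∈ Finset.Icc 1 (t + 1), β j ∈ Ioo 0 1 := fun j hj ↦
    hβ j (Finset.mem_Icc.mp hj).1 (Finset.mem_Icc.mp hj).2
  have hα_pos : ∀ j ∈ Finset.Icc 1 (t + 1), 0 < α j := fun j hj ↦ by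
    rw [hα]; linarith [(hβ' j hj).2]
  have hk_pos : ∀ j ∈ Finset.Icc 1 (t + 1), 0 < k j := fun j hj ↦ by
    rw [hk]; exact div_pos (hβ' j hj).1 (mul_pos (hα_pos j hj) (by positivity))
  have hc : 0 < c := Real.sqrt_pos.mpr (by linarith [(hβ' (t + 1) (by simp)).2])
  have hθ_pos : 0 < θ t := by
    rw [hθ, hαbar]
    refine mul_pos (Real.sqrt_pos.mpr (Finset.prod_pos fun j hj ↦ hα_pos j ?_)) hθ₀
    exact Finset.Icc_subset_Icc_right (by omega) hj
  have hθ_succ : θ (t + 1) = c * θ t := by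
    rw [hθ, hθ, hαbar, hαbar, Finset.prod_Icc_succ_top (by omega), mul_comm,
      Real.sqrt_mul' _ (hα_pos (t + 1) (by simp)).le, hα]
    ring
  have hkbar_pos : 0 < kbar t := by
    rw [hkbar]
    refine Finset.sum_pos (fun j hj ↦ hk_pos j (Finset.Icc_subset_Icc_right (by omega) hj)) ?_
    exact ⟨1, Finset.mem_Icc.mpr ⟨le_rfl, ht⟩⟩
  have hkbar_succ : kbar (t + 1) = kbar t + k (t + 1) := by
    rw [hkbar, hkbar, Finset.sum_Icc_succ_top (by omega)]
  have hrate : (θ t)⁻¹ / c = (θ (t + 1))⁻¹ := by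
    rw [hθ_succ, mul_inv, div_eq_mul_inv, mul_comm]
  rw [hindep.map_const_mul_add hgbarm hgm c, hgbar, hg,
    gammaMeasure_map_const_mul (by positivity) hc, ← hrate,
    gammaMeasure_conv_gammaMeasure hkbar_pos (hk_pos (t + 1) (by simp)) (by positivity),
    hkbar_succ]
end

section
/- Let θ₀ > 0, let T be a positive integer, and let β₁, …, β_T ∈ (0,1). Define α_t = 1 − β_t, ᾱ_t = ∏_{i=1}^t α_i, k_t = β_t/(α_t·θ₀²), θ_t = sqrt(ᾱ_t)·θ₀, and k̄_t = ∑_{i=1}^t k_i. Let x₀ ∈ ℝ, let g₁, …, g_T be mutually independent real random variables with g_t ~ Γ(k_t, θ_t), and define recursively x_t = sqrt(1 − β_t)·x_{t−1} + (g_t − E[g_t]) for t = 1, …, T. Then for every t ∈ {1, …, T}, x_t has the same distribution as sqrt(ᾱ_t)·x₀ + (ḡ_t − E[ḡ_t]), where ḡ_t ~ Γ(k̄_t, θ_t); equivalently, the distribution of x_t is the pushforward of the Gamma measure with shape k̄_t and scale θ_t under the map y ↦ sqrt(ᾱ_t)·x₀ + y − k̄_t·θ_t. -/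
/-!
Centering `x_t` as `Y_t = x_t - √ᾱ_t x₀ + k̄_t θ_t` turns the recursion into
`Y_t = √α_t Y_{t-1} + g_t` with `Y_0 = 0`, because `E g_t = k_t θ_t` and `θ_t = √α_t θ_{t-1}`.
Scaling `Γ(k̄_{t-1}, θ_{t-1})` by `√α_t` gives `Γ(k̄_{t-1}, θ_t)`; `Y_{t-1}` is a function of
`g_1, …, g_{t-1}`, hence independent of `g_t`; and Gamma laws with a common scale convolve by
adding their shapes (a Beta integral), so `Y_t ~ Γ(k̄_t, θ_t)`.
-/

open MeasureTheory ProbabilityTheory Real Set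

lemma sqrt_prod_Icc_succ_top {α : ℕ → ℝ} {t : ℕ} (h : 0 ≤ α (t + 1)) :
    √(∏ i ∈ Finset.Icc 1 (t + 1), α i) = √(α (t + 1)) * √(∏ i ∈ Finset.Icc 1 t, α i) := by
  rw [Finset.prod_Icc_succ_top (Nat.le_add_left 1 t), sqrt_mul' _ h, mul_comm]

namespace ProbabilityTheory

lemma integral_rpow_mul_sub_rpow {a b z : ℝ} (ha : 0 < a) (hb : 0 < b) (hz : 0 < z) :
    ∫ x in 0..z, x ^ (a - 1) * (z - x) ^ (b - 1) = beta a b * z ^ (a + b - 1) := by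
  have hℂ := Complex.betaIntegral_scaled a b hz
  have hcast : ∫ x in 0..z, (x : ℂ) ^ ((a : ℂ) - 1) * ((z : ℂ) - x) ^ ((b : ℂ) - 1)
      = ((∫ x in 0..z, x ^ (a - 1) * (z - x) ^ (b - 1) : ℝ) : ℂ) := by
    rw [← intervalIntegral.integral_ofReal, intervalIntegral.integral_of_le hz.le,
      intervalIntegral.integral_of_le hz.le]
    refine setIntegral_congr_fun measurableSet_Ioc fun x hx => ?_
    rw [Complex.ofReal_mul, Complex.ofReal_cpow hx.1.le,
      Complex.ofReal_cpow (sub_nonneg.2 hx.2), Complex.ofReal_sub]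
    push_cast
    ring
  rw [hcast, show (a : ℂ) + b - 1 = ((a + b - 1 : ℝ) : ℂ) by push_cast; ring,
    ← Complex.ofReal_cpow hz.le] at hℂ
  rw [beta_eq_betaIntegralReal a b ha hb, mul_comm, ← Complex.re_ofReal_mul, ← hℂ,
    Complex.ofReal_re]

lemma mul_gammaPDFReal_div_mul {c r : ℝ} (hc : 0 < c) (hr : 0 ≤ r) (a x : ℝ) :
    c * gammaPDFReal a (r / c) (c * x) = gammaPDFReal a r x := by
  simp only [gammaPDFReal, mul_nonneg_iff_of_pos_left hc]
  split_ifs with hx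
  · rw [mul_rpow hc.le hx, div_rpow hr hc.le, rpow_sub_one hc.ne',
      show r / c * (c * x) = r * x by field_simp]
    have : c ^ a ≠ 0 := (rpow_pos_of_pos hc a).ne'
    field_simp
  · rw [mul_zero]

lemma measurable_gammaPDF (a r : ℝ) : Measurable (gammaPDF a r) :=
  (measurable_gammaPDFReal a r).ennreal_ofReal

lemma gammaMeasure_map_const_mul {c r : ℝ} (hc : 0 < c) (hr : 0 ≤ r) (a : ℝ) :
    (gammaMeasure a r).map (c * ·) = gammaMeasure a (r / c) := by
  refine Measure.ext_of_lintegral _ fun φ hφ => ?_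
  have hF : Measurable fun y => gammaPDF a (r / c) y * φ y := (measurable_gammaPDF _ _).mul hφ
  rw [lintegral_map hφ (measurable_const_mul c), gammaMeasure, gammaMeasure,
    lintegral_withDensity_eq_lintegral_mul _ (measurable_gammaPDF _ _) hφ,
    ← Function.comp_def φ,
    lintegral_withDensity_eq_lintegral_mul _ (measurable_gammaPDF _ _)
      (hφ.comp (measurable_const_mul c))]
  calc ∫⁻ x, gammaPDF a r x * φ (c * x)
      = ∫⁻ x, ENNReal.ofReal c * (gammaPDF a (r / c) (c * x) * φ (c * x)) := by
        refine lintegral_congr fun x => ?_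
        rw [← mul_assoc, gammaPDF, gammaPDF, ← ENNReal.ofReal_mul hc.le,
          mul_gammaPDFReal_div_mul hc hr]
    _ = ENNReal.ofReal c * ∫⁻ y, gammaPDF a (r / c) y * φ y ∂(volume.map (c * ·)) := by
        rw [lintegral_map hF (measurable_const_mul c),
          lintegral_const_mul' _ _ ENNReal.ofReal_ne_top]
    _ = ∫⁻ y, gammaPDF a (r / c) y * φ y := by
        rw [Real.map_volume_mul_left hc.ne', lintegral_smul_measure, smul_eq_mul, ← mul_assoc,
          ← ENNReal.ofReal_mul hc.le, abs_of_pos (inv_pos.2 hc), mul_inv_cancel₀ hc.ne',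
          ENNReal.ofReal_one, one_mul]

lemma integral_gammaMeasure {a r : ℝ} (ha : 0 < a) (hr : 0 < r) (f : ℝ → ℝ) :
    ∫ x, f x ∂gammaMeasure a r = ∫ x, gammaPDFReal a r x * f x := by
  rw [gammaMeasure, integral_withDensity_eq_integral_toReal_smul (measurable_gammaPDF a r)
    (ae_of_all _ fun _ => ENNReal.ofReal_lt_top)]
  simp only [gammaPDF, ENNReal.toReal_ofReal (gammaPDFReal_nonneg ha hr _), smul_eq_mul]

lemma mul_gammaPDFReal {a r : ℝ} (ha : 0 < a) (hr : 0 < r) (x : ℝ) :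
    x * gammaPDFReal a r x = a / r * gammaPDFReal (a + 1) r x := by
  simp only [gammaPDFReal, add_sub_cancel_right]
  split_ifs with hx
  · have hxa : x ^ a = x * x ^ (a - 1) := by
      rw [← rpow_one_add' hx (by simpa using ha.ne'), add_sub_cancel]
    rw [Gamma_add_one ha.ne', rpow_add_one hr.ne', hxa]
    have := (Gamma_pos_of_pos ha).ne'
    field_simp
  · rw [mul_zero, mul_zero]

lemma integral_id_gammaMeasure {a r : ℝ} (ha : 0 < a) (hr : 0 < r) :
    ∫ x, x ∂gammaMeasure a r = a / r := by
  have := isProbabilityMeasure_gammaMeasure (add_pos ha one_pos) hr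
  calc ∫ x, x ∂gammaMeasure a r = ∫ x, a / r * (gammaPDFReal (a + 1) r x * 1) := by
        simp only [integral_gammaMeasure ha hr, mul_comm (gammaPDFReal a r _),
          mul_gammaPDFReal ha hr, mul_one]
    _ = a / r := by
        rw [integral_const_mul, ← integral_gammaMeasure (add_pos ha one_pos) hr]
        simp

lemma lconvolution_gammaPDF_of_neg {a b r z : ℝ} (hz : z < 0) :
    (gammaPDF a r ⋆ₗ gammaPDF b r) z = 0 := by
  refine lintegral_eq_zero_of_ae_eq_zero (ae_of_all _ fun y => ?_)
  rcases lt_or_ge y 0 with hy | hy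
  · simp [gammaPDF_of_neg hy]
  · simp [gammaPDF_of_neg (show -y + z < 0 by linarith)]

lemma lconvolution_gammaPDF_of_pos {a b r z : ℝ} (ha : 0 < a) (hb : 0 < b) (hr : 0 < r)
    (hz : 0 < z) : (gammaPDF a r ⋆ₗ gammaPDF b r) z = gammaPDF (a + b) r z := by
  set K := r ^ a / Gamma a * (r ^ b / Gamma b) * exp (-(r * z))
  have hsupp : (fun y => gammaPDF a r y * gammaPDF b r (-y + z)).support ⊆ Icc 0 z := by
    intro y hy
    by_contra hy'
    rcases not_and_or.1 hy' with hy0 | hyz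
    · exact hy (by simp [gammaPDF_of_neg (not_le.1 hy0)])
    · exact hy (by simp [gammaPDF_of_neg (show -y + z < 0 by linarith)])
  have hpdf : ∀ y ∈ Icc 0 z, gammaPDF a r y * gammaPDF b r (-y + z)
      = ENNReal.ofReal (K * (y ^ (a - 1) * (z - y) ^ (b - 1))) := by
    rintro y ⟨hy0, hyz⟩
    rw [gammaPDF_of_nonneg hy0, gammaPDF_of_nonneg (by linarith),
      ← ENNReal.ofReal_mul (by positivity), neg_add_eq_sub]
    congr 1
    simp only [K, show -(r * z) = -(r * y) + -(r * (z - y)) by ring, exp_add]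
    ring
  have hbeta := integral_rpow_mul_sub_rpow ha hb hz
  have hint : IntegrableOn (fun y => K * (y ^ (a - 1) * (z - y) ^ (b - 1))) (Icc 0 z) := by
    rw [integrableOn_Icc_iff_integrableOn_Ioc]
    exact (intervalIntegral.intervalIntegrable_of_integral_ne_zero
      (hbeta ▸ (mul_pos (beta_pos ha hb) (rpow_pos_of_pos hz _)).ne')).1.integrable.const_mul K
  rw [lconvolution_def, ← setLIntegral_eq_of_support_subset hsupp,
    setLIntegral_congr_fun measurableSet_Icc hpdf,
    ← ofReal_integral_eq_lintegral_ofReal hint ((ae_restrict_iff' measurableSet_Icc).2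
      (ae_of_all _ fun y ⟨hy0, hyz⟩ => mul_nonneg (by positivity)
        (mul_nonneg (rpow_nonneg hy0 _) (rpow_nonneg (sub_nonneg.2 hyz) _)))),
    integral_Icc_eq_integral_Ioc, ← intervalIntegral.integral_of_le hz.le,
    intervalIntegral.integral_const_mul, hbeta, gammaPDF_of_nonneg hz.le]
  congr 1
  simp only [K, beta, rpow_add hr]
  have := (Gamma_pos_of_pos ha).ne'
  have := (Gamma_pos_of_pos hb).ne'
  have := (Gamma_pos_of_pos (add_pos ha hb)).ne'
  field_simp

lemma gammaMeasure_conv_gammaMeasure {a b r : ℝ} (ha : 0 < a) (hb : 0 < b) (hr : 0 < r) :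
    gammaMeasure a r ∗ gammaMeasure b r = gammaMeasure (a + b) r := by
  rw [gammaMeasure, gammaMeasure, gammaMeasure,
    conv_withDensity_eq_lconvolution (measurable_gammaPDF a r) (measurable_gammaPDF b r)]
  refine withDensity_congr_ae ?_
  filter_upwards [Measure.ae_ne volume 0] with z hz
  rcases hz.lt_or_gt with hz | hz
  · rw [lconvolution_gammaPDF_of_neg hz, gammaPDF_of_neg hz]
  · exact lconvolution_gammaPDF_of_pos ha hb hr hz

variable {Ω : Type*} {mΩ : MeasurableSpace Ω} {P : Measure Ω}

lemma IndepFun.hasLaw_const_mul_add_gammaMeasure {Y G : Ω → ℝ} {a b r c : ℝ} (ha : 0 < a)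
    (hb : 0 < b) (hr : 0 < r) (hc : 0 < c) (hY : HasLaw Y (gammaMeasure a r) P)
    (hG : HasLaw G (gammaMeasure b (r / c)) P) (hYG : IndepFun Y G P) :
    HasLaw (fun ω => c * Y ω + G ω) (gammaMeasure (a + b) (r / c)) P := by
  have hcY : HasLaw (fun ω => c * Y ω) (gammaMeasure a (r / c)) P :=
    HasLaw.fun_comp
      ⟨(measurable_const_mul c).aemeasurable, gammaMeasure_map_const_mul hc hr.le a⟩ hY
  have := isProbabilityMeasure_gammaMeasure ha (div_pos hr hc)
  have := isProbabilityMeasure_gammaMeasure hb (div_pos hr hc)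
  rw [← gammaMeasure_conv_gammaMeasure ha hb (div_pos hr hc)]
  exact (hYG.comp (measurable_const_mul c) measurable_id).hasLaw_fun_add hcY hG

lemma iIndepFun.indepFun_of_measurable_iSup_lt {ι β γ : Type*} [Preorder ι]
    {mβ : MeasurableSpace β} {mγ : MeasurableSpace γ} {g : ι → Ω → β} (hg : iIndepFun g P)
    (hgm : ∀ i, Measurable (g i)) {t : ι} {Y : Ω → γ}
    (hY : Measurable[⨆ i < t, mβ.comap (g i)] Y) : IndepFun Y (g t) P := by
  have h := indep_iSup_of_disjoint (fun i => (hgm i).comap_le)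
    ((iIndepFun_iff_iIndep _ _ _).1 hg) (S := Iio t) (T := {t})
    (disjoint_singleton_right.2 (lt_irrefl t))
  rw [IndepFun_iff_Indep]
  exact indep_of_indep_of_le h hY.comap_le (le_iSup₂_of_le t (mem_singleton t) le_rfl)

section Recursion

variable {T : ℕ} {c k θ : ℕ → ℝ} {g Y : ℕ → Ω → ℝ}

lemma measurable_iSup_lt_of_recursion (hY0 : Y 0 = 0)
    (hY : ∀ t, t + 1 ≤ T → Y (t + 1) = fun ω => c (t + 1) * Y t ω + g (t + 1) ω) {s t : ℕ}
    (hst : s < t) (hsT : s ≤ T) :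
    Measurable[⨆ i < t, MeasurableSpace.comap (g i) inferInstance] (Y s) := by
  induction s with
  | zero => rw [hY0]; exact measurable_const
  | succ s ih =>
    rw [hY s hsT]
    have hg : Measurable[⨆ i < t, MeasurableSpace.comap (g i) inferInstance] (g (s + 1)) :=
      (comap_measurable (g (s + 1))).mono (le_iSup₂_of_le (s + 1) hst le_rfl) le_rfl
    exact (measurable_const.mul (ih (by omega) (by omega))).add hg

theorem hasLaw_gammaMeasure_of_recursion
    (hk : ∀ t, 1 ≤ t → t ≤ T → 0 < k t) (hθ : ∀ t, 1 ≤ t → t ≤ T → 0 < θ t)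
    (hθ_succ : ∀ t, 1 ≤ t → t + 1 ≤ T → θ (t + 1) = c (t + 1) * θ t)
    (hgm : ∀ t, Measurable (g t))
    (hg : ∀ t, 1 ≤ t → t ≤ T → HasLaw (g t) (gammaMeasure (k t) (θ t)⁻¹) P)
    (hindep : iIndepFun g P) (hY0 : Y 0 = 0)
    (hY : ∀ t, t + 1 ≤ T → Y (t + 1) = fun ω => c (t + 1) * Y t ω + g (t + 1) ω) {t : ℕ}
    (ht : 1 ≤ t) (htT : t ≤ T) :
    HasLaw (Y t) (gammaMeasure (∑ i ∈ Finset.Icc 1 t, k i) (θ t)⁻¹) P := by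
  induction t, ht using Nat.le_induction with
  | base =>
    have hY1 : Y 1 = g 1 := by rw [hY 0 htT, hY0]; simp
    simpa [hY1] using hg 1 le_rfl htT
  | succ n hn ih =>
    have hθn := hθ n hn (by omega)
    have hc : 0 < c (n + 1) := by
      have := hθ (n + 1) (by omega) htT
      rw [hθ_succ n hn htT] at this
      exact pos_of_mul_pos_left this hθn.le
    have hrate : (θ (n + 1))⁻¹ = (θ n)⁻¹ / c (n + 1) := by
      rw [hθ_succ n hn htT, mul_inv, div_eq_mul_inv, mul_comm]
    rw [hY n htT, Finset.sum_Icc_succ_top (Nat.le_succ_of_le hn) k, hrate]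
    have hsum_pos : 0 < ∑ i ∈ Finset.Icc 1 n, k i := Finset.sum_pos
      (fun i hi => hk i (Finset.mem_Icc.1 hi).1 ((Finset.mem_Icc.1 hi).2.trans (by omega)))
      ⟨1, Finset.mem_Icc.2 ⟨le_rfl, hn⟩⟩
    refine IndepFun.hasLaw_const_mul_add_gammaMeasure hsum_pos (hk (n + 1) (by omega) htT)
      (inv_pos.2 hθn) hc (ih (by omega)) (hrate ▸ hg (n + 1) (by omega) htT) ?_
    exact hindep.indepFun_of_measurable_iSup_lt hgm
      (measurable_iSup_lt_of_recursion hY0 hY (Nat.lt_succ_self n) (by omega))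

end Recursion

end ProbabilityTheory

theorem gamma_diffusion_closed_form_general {Ω : Type*} [MeasureSpace Ω]
    [IsProbabilityMeasure (ℙ : Measure Ω)]
    (θ₀ : ℝ) (hθ₀ : 0 < θ₀) (T : ℕ)
    (β : ℕ → ℝ) (hβ : ∀ t, 1 ≤ t → t ≤ T → β t ∈ Set.Ioo (0 : ℝ) 1)
    (α : ℕ → ℝ) (hα : ∀ t, α t = 1 - β t)
    (αbar : ℕ → ℝ) (hαbar : ∀ t, αbar t = ∏ i ∈ Finset.Icc 1 t, α i)
    (k : ℕ → ℝ) (hk : ∀ t, k t = β t / (α t * θ₀ ^ 2))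
    (θ : ℕ → ℝ) (hθ : ∀ t, θ t = Real.sqrt (αbar t) * θ₀)
    (kbar : ℕ → ℝ) (hkbar : ∀ t, kbar t = ∑ i ∈ Finset.Icc 1 t, k i)
    (x₀ : ℝ) (g : ℕ → Ω → ℝ) (hgm : ∀ t, Measurable (g t))
    (hg : ∀ t, 1 ≤ t → t ≤ T → Measure.map (g t) ℙ = gammaMeasure (k t) (θ t)⁻¹)
    (hgindep : iIndepFun g ℙ)
    (x : ℕ → Ω → ℝ) (hx0 : x 0 = fun _ => x₀)
    (hxrec : ∀ t, 1 ≤ t → t ≤ T →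
      x t = fun ω => Real.sqrt (1 - β t) * x (t - 1) ω + (g t ω - ∫ ω', g t ω' ∂ℙ)) :
    ∀ t, 1 ≤ t → t ≤ T →
      Measure.map (x t) ℙ =
        Measure.map (fun y : ℝ => Real.sqrt (αbar t) * x₀ + y - kbar t * θ t)
          (gammaMeasure (kbar t) (θ t)⁻¹) := by
  intro t ht htT
  have hα_pos : ∀ i, 1 ≤ i → i ≤ T → 0 < α i := fun i h1 h2 => by
    rw [hα]; linarith [(hβ i h1 h2).2]
  have hθ_pos : ∀ t ≤ T, 0 < θ t := fun t htT => by
    rw [hθ, hαbar]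
    refine mul_pos (Real.sqrt_pos.2 (Finset.prod_pos fun i hi => ?_)) hθ₀
    exact hα_pos i (Finset.mem_Icc.1 hi).1 ((Finset.mem_Icc.1 hi).2.trans htT)
  have hk_pos : ∀ t, 1 ≤ t → t ≤ T → 0 < k t := fun t h1 h2 => by
    rw [hk]; exact div_pos (hβ t h1 h2).1 (mul_pos (hα_pos t h1 h2) (by positivity))
  have hsqrt_succ : ∀ t, t + 1 ≤ T → √(αbar (t + 1)) = √(1 - β (t + 1)) * √(αbar t) :=
    fun t ht => by
      rw [hαbar, hαbar, ← hα, sqrt_prod_Icc_succ_top (hα_pos _ (by omega) ht).le]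
  have hθ_succ : ∀ t, t + 1 ≤ T → θ (t + 1) = √(1 - β (t + 1)) * θ t := fun t ht => by
    rw [hθ, hθ, hsqrt_succ t ht, mul_assoc]
  have hg_law : ∀ t, 1 ≤ t → t ≤ T → HasLaw (g t) (gammaMeasure (k t) (θ t)⁻¹) ℙ :=
    fun t h1 h2 => ⟨(hgm t).aemeasurable, hg t h1 h2⟩
  have hmean : ∀ t, 1 ≤ t → t ≤ T → ∫ ω, g t ω ∂ℙ = k t * θ t := fun t h1 h2 => by
    rw [(hg_law t h1 h2).integral_eq,
      integral_id_gammaMeasure (hk_pos t h1 h2) (inv_pos.2 (hθ_pos t h2)), div_inv_eq_mul]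
  set Y : ℕ → Ω → ℝ := fun t ω => x t ω - √(αbar t) * x₀ + kbar t * θ t
  have hY0 : Y 0 = 0 := by
    funext ω; simp [Y, hx0, hαbar, hkbar]
  have hY : ∀ t, t + 1 ≤ T →
      Y (t + 1) = fun ω => √(1 - β (t + 1)) * Y t ω + g (t + 1) ω := by
    intro t ht; funext ω
    simp only [Y, hxrec (t + 1) (by omega) ht, Nat.add_sub_cancel, hmean (t + 1) (by omega) ht,
      hkbar, Finset.sum_Icc_succ_top (Nat.le_add_left 1 t), hsqrt_succ t ht, hθ_succ t ht]
    ring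
  have hY_law := hasLaw_gammaMeasure_of_recursion (c := fun t => √(1 - β t)) hk_pos
    (fun t _ => hθ_pos t) (fun t _ => hθ_succ t) hgm hg_law hgindep hY0 hY ht htT
  rw [← hkbar] at hY_law
  have hx : x t = (fun y => √(αbar t) * x₀ + y - kbar t * θ t) ∘ Y t := by
    funext ω; simp only [Y, Function.comp_apply]; ring
  rw [hx]
  exact (HasLaw.comp ⟨by fun_prop, rfl⟩ hY_law).map_eq

/-- Closed form of the Gamma diffusion process.  Let `θ₀ > 0`, `T ≥ 1`,
`β₁, …, β_T ∈ (0,1)`, `α_t = 1 − β_t`, `ᾱ_t = ∏_{i=1}^t α_i`, `k_t = β_t/(α_t·θ₀²)`,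
`θ_t = sqrt(ᾱ_t)·θ₀` and `k̄_t = ∑_{i=1}^t k_i`.  Let `x₀ ∈ ℝ`, let `g₁, …, g_T` be
mutually independent with `g_t ~ Γ(k_t, θ_t)` (shape/scale parametrization, i.e. rate
`1/θ_t`), and define `x_t = sqrt(1 − β_t)·x_{t−1} + (g_t − E[g_t])`.  Then for every
`t ∈ {1, …, T}`, the distribution of `x_t` is the pushforward of the Gamma measure with
shape `k̄_t` and scale `θ_t` under `y ↦ sqrt(ᾱ_t)·x₀ + y − k̄_t·θ_t`, i.e. `x_t` has the
same law as `sqrt(ᾱ_t)·x₀ + (ḡ_t − E[ḡ_t])` with `ḡ_t ~ Γ(k̄_t, θ_t)`. -/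
theorem gamma_diffusion_closed_form {Ω : Type*} [MeasureSpace Ω]
    [IsProbabilityMeasure (ℙ : Measure Ω)]
    (θ₀ : ℝ) (hθ₀ : 0 < θ₀) (T : ℕ) (hT : 0 < T)
    (β : ℕ → ℝ) (hβ : ∀ t, 1 ≤ t → t ≤ T → β t ∈ Set.Ioo (0 : ℝ) 1)
    (α : ℕ → ℝ) (hα : ∀ t, α t = 1 - β t)
    (αbar : ℕ → ℝ) (hαbar : ∀ t, αbar t = ∏ i ∈ Finset.Icc 1 t, α i)
    (k : ℕ → ℝ) (hk : ∀ t, k t = β t / (α t * θ₀ ^ 2))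
    (θ : ℕ → ℝ) (hθ : ∀ t, θ t = Real.sqrt (αbar t) * θ₀)
    (kbar : ℕ → ℝ) (hkbar : ∀ t, kbar t = ∑ i ∈ Finset.Icc 1 t, k i)
    (x₀ : ℝ) (g : ℕ → Ω → ℝ) (hgm : ∀ t, Measurable (g t))
    (hg : ∀ t, 1 ≤ t → t ≤ T → Measure.map (g t) ℙ = gammaMeasure (k t) (θ t)⁻¹)
    (hgindep : iIndepFun g ℙ)
    (x : ℕ → Ω → ℝ) (hx0 : x 0 = fun _ => x₀)
    (hxrec : ∀ t, 1 ≤ t → t ≤ T →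
      x t = fun ω => Real.sqrt (1 - β t) * x (t - 1) ω + (g t ω - ∫ ω', g t ω' ∂ℙ)) :
    ∀ t, 1 ≤ t → t ≤ T →
      Measure.map (x t) ℙ =
        Measure.map (fun y : ℝ => Real.sqrt (αbar t) * x₀ + y - kbar t * θ t)
          (gammaMeasure (kbar t) (θ t)⁻¹) :=
  gamma_diffusion_closed_form_general θ₀ hθ₀ T β hβ α hα αbar hαbar k hk θ hθ kbar hkbar x₀ g hgm hg
    hgindep x hx0 hxrec
end
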